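/- arXiv:1209.5628 — 4 statements merged into one kernel-verified Lean document; each statement's English description precedes it below -/
import Mathlib

section
/- For every integer k ≥ 1, the z-derivative of the deformed Eisenstein series satisfies (k/(k+1))·∂_z J_{k+1}(z,τ) = ∂_τ J_k(z,τ), where ∂_z = (1/2πi)∂/∂z and ∂_τ = (1/2πi)∂/∂τ. -/
open Complex

noncomputable section

/-- `q = e^{2πiτ}` -/
def qq (τ : ℂ) : ℂ := Complex.exp (2 * (Real.pi : ℂ) * I * τ)

/-- `p = e^{2πiz}` -/
def pp (z : ℂ) : ℂ := Complex.exp (2 * (Real.pi : ℂ) * I * z)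

/-- Deformed (twisted) Eisenstein series `J_n(z,τ)`. -/
def Jdef (n : ℕ) (z τ : ℂ) : ℂ :=
  (if n = 1 then pp z / (pp z - 1) else 0) + (bernoulli n : ℂ)
    - n * ∑' (k : ℕ+) (r : ℕ+),
        (r : ℂ) ^ (n - 1) * ((pp z) ^ (k : ℕ) + (-1 : ℂ) ^ n * (pp z) ^ (-(k : ℤ)))
          * (qq τ) ^ ((k : ℕ) * (r : ℕ))

/-- Normalized Eisenstein series `E_{2k}`. -/
def Eis (k : ℕ) (τ : ℂ) : ℂ :=
  1 - (4 * k / (bernoulli (2 * k) : ℂ)) *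
      ∑' n : ℕ+, (ArithmeticFunction.sigma (2 * k - 1) n : ℂ) * qq τ ^ (n : ℕ)

/-- Normalized differential in `z`: `(1/2πi) d/dz`. -/
def dz (f : ℂ → ℂ) : ℂ → ℂ := fun z => (2 * (Real.pi : ℂ) * I)⁻¹ * deriv f z

/-- The first Jacobi theta function. -/
def θ₁ (z τ : ℂ) : ℂ :=
  -I * Complex.exp (2 * (Real.pi : ℂ) * I * τ / 8)
    * (Complex.exp ((Real.pi : ℂ) * I * z) - Complex.exp (-((Real.pi : ℂ) * I * z)))
    * ∏' m : ℕ+, (1 - qq τ ^ (m : ℕ)) * (1 - pp z * qq τ ^ (m : ℕ))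
        * (1 - (pp z)⁻¹ * qq τ ^ (m : ℕ))

/-- The Weierstrass ℘ function as given by its Laurent series. -/
def wp (z τ : ℂ) : ℂ :=
  ((2 * (Real.pi : ℂ) * I) ^ 2)⁻¹ *
    (1 / z ^ 2 + ∑' n : ℕ+, ((2 * (n : ℂ) + 1) * 2 * riemannZeta (2 * (n : ℕ) + 2)
        * Eis ((n : ℕ) + 1) τ * z ^ (2 * (n : ℕ))))


/-- Normalized differential in `τ`: `(1/2πi) d/dτ`. -/
def dτ' (f : ℂ → ℂ) : ℂ → ℂ := fun τ => (2 * (Real.pi : ℂ) * I)⁻¹ * deriv f τ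

/-!
Write `J_n = const - n ∑_{k,r ≥ 1} t_n(k, r)` with
`t_n(k, r) = r^{n-1} (p^k + (-1)^n p^{-k}) q^{kr}`; the term `p/(p-1)` of `J_1` does not depend
on `τ`. Since `∂_z p^{±k} = ±k p^{±k}` and `∂_τ q^{kr} = kr q^{kr}`, both `∂_z t_{n+1}(k, r)` and
`∂_τ t_n(k, r)` equal `kr · t_n(k, r)`, so `∂_z J_{n+1} = -(n+1) S` and `∂_τ J_n = -n S` for the
same series `S`. Differentiating termwise is justified by the Weierstrass M-test for holomorphic
functions: near the given point `|t_n(k, r)| ≤ 2 r^{n-1} ρ^{kr}` for some `ρ < 1`, and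
`ρ^{kr} ≤ (√ρ)^k (√ρ)^r` makes the bound summable over pairs.
-/

open Filter Topology

lemma pp_neg (w : ℂ) : pp (-w) = (pp w)⁻¹ := by
  rw [pp, pp, ← Complex.exp_neg, mul_neg]

lemma qq_eq_pp : qq = pp := rfl

lemma pp_ne_zero (w : ℂ) : pp w ≠ 0 := Complex.exp_ne_zero _

lemma continuous_pp : Continuous pp := by
  unfold pp; fun_prop

lemma hasDerivAt_pp_zpow (m : ℤ) (w : ℂ) :
    HasDerivAt (fun x => pp x ^ m) (2 * Real.pi * I * m * pp w ^ m) w := by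
  have h : ∀ x, pp x ^ m = Complex.exp (2 * Real.pi * I * m * x) := fun x => by
    rw [pp, ← Complex.exp_int_mul]; ring_nf
  simp only [h]
  exact (((hasDerivAt_id w).const_mul _).cexp).congr_deriv (by simp [mul_comm])

lemma one_le_max_norm_norm_inv {p : ℂ} (hp : p ≠ 0) : 1 ≤ max ‖p‖ ‖p⁻¹‖ := by
  rcases le_total 1 ‖p‖ with h | h
  · exact h.trans (le_max_left _ _)
  · rw [norm_inv]
    exact (one_le_inv₀ (norm_pos_iff.mpr hp)).mpr h |>.trans (le_max_right _ _)

def jTerm (n : ℕ) (p q : ℂ) (i : ℕ+ × ℕ+) : ℂ :=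
  (i.2 : ℂ) ^ (n - 1) * (p ^ (i.1 : ℕ) + (-1 : ℂ) ^ n * p ^ (-(i.1 : ℤ)))
    * q ^ ((i.1 : ℕ) * (i.2 : ℕ))

lemma Jdef_eq_sub_tsum {n : ℕ} {z τ : ℂ} (hs : Summable (jTerm n (pp z) (qq τ))) :
    Jdef n z τ = (if n = 1 then pp z / (pp z - 1) else 0) + (bernoulli n : ℂ)
      - n * ∑' i, jTerm n (pp z) (qq τ) i := by
  rw [Jdef, hs.tsum_prod' hs.prod_factor]
  rfl

lemma norm_jTerm_le (n : ℕ) {p q : ℂ} {P Q : ℝ} (hP : 1 ≤ P) (hp : ‖p‖ ≤ P) (hp' : ‖p⁻¹‖ ≤ P)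
    (hq : ‖q‖ ≤ Q) (i : ℕ+ × ℕ+) :
    ‖jTerm n p q i‖ ≤ 2 * ((i.2 : ℝ) ^ (n - 1) * (P * Q) ^ ((i.1 : ℕ) * (i.2 : ℕ))) := by
  have hk : (i.1 : ℕ) ≤ (i.1 : ℕ) * (i.2 : ℕ) := Nat.le_mul_of_pos_right _ i.2.pos
  have hmid : ‖p ^ (i.1 : ℕ) + (-1 : ℂ) ^ n * p ^ (-(i.1 : ℤ))‖ ≤ 2 * P ^ (i.1 : ℕ) := by
    calc _ ≤ ‖p‖ ^ (i.1 : ℕ) + ‖p⁻¹‖ ^ (i.1 : ℕ) := by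
          refine (norm_add_le _ _).trans_eq ?_
          simp [zpow_neg, norm_pow]
      _ ≤ 2 * P ^ (i.1 : ℕ) := by
          linarith [pow_le_pow_left₀ (norm_nonneg _) hp (i.1 : ℕ),
            pow_le_pow_left₀ (norm_nonneg _) hp' (i.1 : ℕ)]
  have hQ : 0 ≤ Q := (norm_nonneg _).trans hq
  calc ‖jTerm n p q i‖
      = (i.2 : ℝ) ^ (n - 1) * ‖p ^ (i.1 : ℕ) + (-1 : ℂ) ^ n * p ^ (-(i.1 : ℤ))‖
          * ‖q‖ ^ ((i.1 : ℕ) * (i.2 : ℕ)) := by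
        simp only [jTerm, norm_mul, norm_pow, Complex.norm_natCast]
    _ ≤ (i.2 : ℝ) ^ (n - 1) * (2 * P ^ ((i.1 : ℕ) * (i.2 : ℕ))) * Q ^ ((i.1 : ℕ) * (i.2 : ℕ)) := by
        gcongr
        exact hmid.trans (by gcongr)
    _ = _ := by ring

lemma summable_pow_mul_pow_mul_pnat (m : ℕ) {ρ : ℝ} (h0 : 0 ≤ ρ) (h1 : ρ < 1) :
    Summable (fun i : ℕ+ × ℕ+ => (i.2 : ℝ) ^ m * ρ ^ ((i.1 : ℕ) * (i.2 : ℕ))) := by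
  obtain ⟨σ, hσ0, hσ1, hσρ⟩ : ∃ σ : ℝ, 0 ≤ σ ∧ σ < 1 ∧ σ ^ 2 = ρ :=
    ⟨√ρ, Real.sqrt_nonneg ρ, by rwa [Real.sqrt_lt' one_pos, one_pow], Real.sq_sqrt h0⟩
  have hσ : Summable (fun a : ℕ+ => σ ^ (a : ℕ)) :=
    (summable_geometric_of_lt_one hσ0 hσ1).comp_injective PNat.coe_injective
  have hrσ : Summable (fun b : ℕ+ => (b : ℝ) ^ m * σ ^ (b : ℕ)) :=
    (summable_pow_mul_geometric_of_norm_lt_one (R := ℝ) m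
      (by rwa [Real.norm_of_nonneg hσ0])).comp_injective PNat.coe_injective
  refine (hσ.mul_of_nonneg hrσ (fun _ => by positivity) (fun _ => by positivity)).of_nonneg_of_le
    (fun _ => by positivity) (fun i => ?_)
  have hkr : (i.1 : ℕ) + (i.2 : ℕ) ≤ 2 * ((i.1 : ℕ) * (i.2 : ℕ)) := by
    nlinarith [i.1.pos, i.2.pos]
  calc (i.2 : ℝ) ^ m * ρ ^ ((i.1 : ℕ) * (i.2 : ℕ))
      = (i.2 : ℝ) ^ m * σ ^ (2 * ((i.1 : ℕ) * (i.2 : ℕ))) := by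
        rw [pow_mul σ, hσρ]
    _ ≤ (i.2 : ℝ) ^ m * σ ^ ((i.1 : ℕ) + (i.2 : ℕ)) :=
        mul_le_mul_of_nonneg_left (pow_le_pow_of_le_one hσ0 hσ1.le hkr) (by positivity)
    _ = σ ^ (i.1 : ℕ) * ((i.2 : ℝ) ^ m * σ ^ (i.2 : ℕ)) := by ring

lemma hasDerivAt_jTerm_pp {n : ℕ} (hn : 1 ≤ n) (q : ℂ) (i : ℕ+ × ℕ+) (w : ℂ) :
    HasDerivAt (fun x => jTerm (n + 1) (pp x) q i)
      (2 * Real.pi * I * ((i.1 : ℕ) * (i.2 : ℕ) : ℕ) * jTerm n (pp w) q i) w := by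
  have hpow := hasDerivAt_pp_zpow (i.1 : ℕ) w
  have hinv := (hasDerivAt_pp_zpow (-(i.1 : ℤ)) w).const_mul ((-1 : ℂ) ^ (n + 1))
  simp only [zpow_natCast] at hpow
  refine (((hpow.add hinv).const_mul _).mul_const _).congr_deriv ?_
  obtain ⟨m, rfl⟩ := Nat.exists_eq_add_of_le' hn
  simp only [jTerm, Nat.add_sub_cancel, pow_succ]
  push_cast
  ring

lemma hasDerivAt_jTerm_qq (n : ℕ) (p : ℂ) (i : ℕ+ × ℕ+) (s : ℂ) :
    HasDerivAt (fun x => jTerm n p (qq x) i)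
      (2 * Real.pi * I * ((i.1 : ℕ) * (i.2 : ℕ) : ℕ) * jTerm n p (qq s) i) s := by
  have hq := hasDerivAt_pp_zpow ((i.1 : ℕ) * (i.2 : ℕ) : ℕ) s
  simp only [zpow_natCast] at hq
  refine (hq.const_mul _).congr_deriv ?_
  simp only [jTerm, qq_eq_pp]
  push_cast
  ring

lemma hasDerivAt_tsum_of_norm_le {ι : Type*} {F F' : ι → ℂ → ℂ} {u : ι → ℝ} {U : Set ℂ}
    {z : ℂ} (hU : IsOpen U) (hz : z ∈ U) (hu : Summable u)
    (hF : ∀ i, ∀ w ∈ U, HasDerivAt (F i) (F' i w) w) (hle : ∀ i, ∀ w ∈ U, ‖F i w‖ ≤ u i) :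
    HasDerivAt (fun w => ∑' i, F i w) (∑' i, F' i z) z := by
  have hd : ∀ i, DifferentiableOn ℂ (F i) U := fun i w hw =>
    (hF i w hw).differentiableAt.differentiableWithinAt
  have hderiv := (hasSum_deriv_of_summable_norm hu hd hU hle hz).tsum_eq
  rw [tsum_congr fun i => (hF i z hz).deriv] at hderiv
  rw [hderiv]
  exact ((differentiableOn_tsum_of_summable_norm hu hd hU hle).differentiableAt
    (hU.mem_nhds hz)).hasDerivAt

lemma max_norm_norm_inv_lt_inv {p q : ℂ} (h1 : ‖q‖ < ‖p‖) (h2 : ‖p‖ < ‖q‖⁻¹) :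
    max ‖p‖ ‖p⁻¹‖ < ‖q‖⁻¹ := by
  have hq : 0 < ‖q‖ := inv_pos.mp ((norm_nonneg p).trans_lt h2)
  refine max_lt h2 ?_
  rw [norm_inv]
  exact (inv_lt_inv₀ (hq.trans h1) hq).mpr h1

lemma hasDerivAt_Jdef_succ_in_z {n : ℕ} (hn : 1 ≤ n) {z τ : ℂ} (h1 : ‖qq τ‖ < ‖pp z‖)
    (h2 : ‖pp z‖ < ‖qq τ‖⁻¹) :
    HasDerivAt (fun w => Jdef (n + 1) w τ)
      (-((n + 1 : ℕ) * ∑' i, 2 * Real.pi * I * ((i.1 : ℕ) * (i.2 : ℕ) : ℕ)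
        * jTerm n (pp z) (qq τ) i)) z := by
  have hq : 0 < ‖qq τ‖ := inv_pos.mp ((norm_nonneg _).trans_lt h2)
  obtain ⟨P, hzP, hPq⟩ := exists_between (max_norm_norm_inv_lt_inv h1 h2)
  have hP : 1 ≤ P := (one_le_max_norm_norm_inv (pp_ne_zero z)).trans hzP.le
  have hPQ : P * ‖qq τ‖ < 1 := by rwa [← one_div, lt_div_iff₀ hq] at hPq
  set U := {w : ℂ | ‖pp w‖ < P ∧ ‖pp (-w)‖ < P}
  have hU : IsOpen U := (isOpen_lt continuous_pp.norm continuous_const).inter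
    (isOpen_lt (continuous_pp.comp continuous_neg).norm continuous_const)
  have hzU : z ∈ U := by
    rw [Set.mem_ofPred_eq, pp_neg]
    exact ⟨(le_max_left _ _).trans_lt hzP, (le_max_right _ _).trans_lt hzP⟩
  have hle : ∀ i, ∀ w ∈ U, ‖jTerm (n + 1) (pp w) (qq τ) i‖
      ≤ 2 * ((i.2 : ℝ) ^ n * (P * ‖qq τ‖) ^ ((i.1 : ℕ) * (i.2 : ℕ))) :=
    fun i w hw => by
      simpa using norm_jTerm_le (n + 1) (q := qq τ) hP hw.1.le (pp_neg w ▸ hw.2.le) le_rfl i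
  have hu := (summable_pow_mul_pow_mul_pnat n (by positivity) hPQ).mul_left 2
  have hJ : (fun w => Jdef (n + 1) w τ) =ᶠ[𝓝 z]
      fun w => (bernoulli (n + 1) : ℂ) - (n + 1 : ℕ) * ∑' i, jTerm (n + 1) (pp w) (qq τ) i :=
    eventually_of_mem (hU.mem_nhds hzU) fun w hw => by
      dsimp only
      rw [Jdef_eq_sub_tsum (hu.of_norm_bounded (hle · w hw)), if_neg (by omega), zero_add]
  exact (((hasDerivAt_tsum_of_norm_le hU hzU hu (fun i w _ => hasDerivAt_jTerm_pp hn _ i w)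
    hle).const_mul _).const_sub _).congr_of_eventuallyEq hJ

lemma hasDerivAt_Jdef_in_τ (n : ℕ) {z τ : ℂ} (h1 : ‖qq τ‖ < ‖pp z‖) (h2 : ‖pp z‖ < ‖qq τ‖⁻¹) :
    HasDerivAt (fun s => Jdef n z s)
      (-(n * ∑' i, 2 * Real.pi * I * ((i.1 : ℕ) * (i.2 : ℕ) : ℕ) * jTerm n (pp z) (qq τ) i)) τ := by
  set P := max ‖pp z‖ ‖(pp z)⁻¹‖
  have hP : 0 < P := zero_lt_one.trans_le (one_le_max_norm_norm_inv (pp_ne_zero z))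
  have hPq : ‖qq τ‖ < P⁻¹ := by
    rw [lt_inv_comm₀ (inv_pos.mp ((norm_nonneg _).trans_lt h2)) hP]
    exact max_norm_norm_inv_lt_inv h1 h2
  obtain ⟨Q, hτQ, hQP⟩ := exists_between hPq
  have hPQ : P * Q < 1 := by rwa [← one_div, lt_div_iff₀' hP] at hQP
  set U := {s : ℂ | ‖qq s‖ < Q}
  have hU : IsOpen U := isOpen_lt continuous_pp.norm continuous_const
  have hτU : τ ∈ U := hτQ
  have hle : ∀ i, ∀ s ∈ U,
      ‖jTerm n (pp z) (qq s) i‖ ≤ 2 * ((i.2 : ℝ) ^ (n - 1) * (P * Q) ^ ((i.1 : ℕ) * (i.2 : ℕ))) :=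
    fun i s hs =>
      norm_jTerm_le n (one_le_max_norm_norm_inv (pp_ne_zero z)) (le_max_left _ _)
        (le_max_right _ _) hs.le i
  have hu := (summable_pow_mul_pow_mul_pnat (n - 1)
    (mul_nonneg hP.le ((norm_nonneg _).trans hτQ.le)) hPQ).mul_left 2
  have hJ : (fun s => Jdef n z s) =ᶠ[𝓝 τ] fun s => ((if n = 1 then pp z / (pp z - 1) else 0)
      + (bernoulli n : ℂ)) - n * ∑' i, jTerm n (pp z) (qq s) i :=
    eventually_of_mem (hU.mem_nhds hτU) fun s hs =>
      Jdef_eq_sub_tsum (hu.of_norm_bounded (hle · s hs))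
  exact (((hasDerivAt_tsum_of_norm_le hU hτU hu (fun i s _ => hasDerivAt_jTerm_qq n _ i s)
    hle).const_mul _).const_sub _).congr_of_eventuallyEq hJ

theorem deformed_eisenstein_diff_relation_general (k : ℕ) (hk : 1 ≤ k) (z τ : ℂ)
    (h1 : ‖qq τ‖ < ‖pp z‖)
    (h2 : ‖pp z‖ < (‖qq τ‖)⁻¹) :
    ((k : ℂ) / ((k : ℂ) + 1)) * dz (fun w => Jdef (k + 1) w τ) z
      = dτ' (fun s => Jdef k z s) τ := by
  rw [dz, dτ', (hasDerivAt_Jdef_succ_in_z hk h1 h2).deriv, (hasDerivAt_Jdef_in_τ k h1 h2).deriv]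
  have hk1 : (k : ℂ) + 1 ≠ 0 := Nat.cast_add_one_ne_zero k
  push_cast
  field_simp

/-- `(k/(k+1)) ∂_z J_{k+1} = ∂_τ J_k` for `k ≥ 1`. -/
theorem deformed_eisenstein_diff_relation (k : ℕ) (hk : 1 ≤ k) (z τ : ℂ)
    (hτ : 0 < τ.im)
    (h1 : ‖qq τ‖ < ‖pp z‖)
    (h2 : ‖pp z‖ < (‖qq τ‖)⁻¹)
    (hp : pp z ≠ 1) :
    ((k : ℂ) / ((k : ℂ) + 1)) * dz (fun w => Jdef (k + 1) w τ) z
      = dτ' (fun s => Jdef k z s) τ :=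
  deformed_eisenstein_diff_relation_general k hk z τ h1 h2

end
end

section
/- For all integers λ, μ and all n ≥ 0, the deformed Eisenstein series satisfies the elliptic transformation law J_n(z + λτ + μ, τ) = Σ_{k=0}^{n} (-1)^{n+k} C(n,k) λ^{n-k} J_k(z,τ). -/
open Complex

noncomputable section

/-!
Write `p = e^{2πiz}` and `q = e^{2πiτ}`. In the annulus `|q| < |p| < |q|⁻¹` the double series
defining `J_n` splits as `Σ_k (p^k + (-1)^n p^{-k}) Li_{1-n}(q^k)`, and since both `p` and
`p q^λ` lie in that annulus, `|λ| ≤ 1`. The case `λ = -1` reduces to `λ = 1` through the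
symmetry `J_n(1/p) = (-1)^n J_n(p)`. For `λ = 1`, replacing `p` by `pq` multiplies
`Li_{1-n}(x)` by `x^{±1}`, i.e. shifts `r ↦ r ∓ 1` in `Σ_r r^{n-1} x^r`; expanding
`n (r ∓ 1)^{n-1}` binomially expresses the result through the `J_j(p)`. The boundary terms of
the shifts are geometric series, which cancel against `p/(p-1)` and against the Bernoulli
identity `Σ_{j<n} C(n,j) B'_j = n`.
-/

open Finset

theorem nat_mul_add_pow_pred {R : Type*} [CommRing R] (n : ℕ) (r c : R) :
    n * (r + c) ^ (n - 1) = ∑ j ∈ range (n + 1), j * n.choose j * r ^ (j - 1) * c ^ (n - j) := by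
  have h := congrArg (Polynomial.eval r) (Polynomial.derivative_X_add_C_pow c n)
  rw [add_pow] at h
  simp only [← Polynomial.C_pow, Polynomial.derivative_sum, Polynomial.derivative_mul,
    Polynomial.derivative_X_pow, Polynomial.derivative_C, Polynomial.derivative_natCast,
    mul_zero, add_zero, Polynomial.eval_finsetSum, Polynomial.eval_mul, Polynomial.eval_natCast,
    Polynomial.eval_pow, Polynomial.eval_X, Polynomial.eval_C, Polynomial.eval_add] at h
  rw [← h]
  exact Finset.sum_congr rfl fun j _ => by ring

theorem neg_one_pow_add_eq_neg_one_pow_sub {R : Type*} [Monoid R] [HasDistribNeg R] {n k : ℕ}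
    (h : k ≤ n) : (-1 : R) ^ (n + k) = (-1) ^ (n - k) := by
  rw [show n + k = n - k + 2 * k by omega, pow_add, pow_mul]
  simp

theorem neg_one_pow_mul_neg_one_pow_self {R : Type*} [Monoid R] [HasDistribNeg R] (n : ℕ) :
    (-1 : R) ^ n * (-1) ^ n = 1 := by
  rw [← pow_add, ← two_mul, pow_mul, neg_one_sq, one_pow]

/-- The polylogarithm `Li_{1-j}`, for `j ≥ 1` (at `j = 0` the exponent `j - 1` truncates to `0`). -/
def negPolylog (j : ℕ) (x : ℂ) : ℂ := ∑' r : ℕ+, (r : ℂ) ^ (j - 1) * x ^ (r : ℕ)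

theorem summable_negPolylog (j : ℕ) {x : ℂ} (hx : ‖x‖ < 1) :
    Summable fun r : ℕ+ => (r : ℂ) ^ (j - 1) * x ^ (r : ℕ) :=
  (summable_pow_mul_geometric_of_norm_lt_one (j - 1) hx).comp_injective PNat.coe_injective

theorem hasSum_nat_mul_add_pow_pred_mul_pow (n : ℕ) (c : ℂ) {x : ℂ} (hx : ‖x‖ < 1) :
    HasSum (fun r : ℕ+ => n * ((r : ℂ) + c) ^ (n - 1) * x ^ (r : ℕ))
      (∑ j ∈ range (n + 1), j * n.choose j * c ^ (n - j) * negPolylog j x) := by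
  refine (hasSum_sum fun j _ =>
    (summable_negPolylog j hx).hasSum.mul_left (j * n.choose j * c ^ (n - j))).congr_fun ?_
  intro r
  rw [nat_mul_add_pow_pred, Finset.sum_mul]
  exact Finset.sum_congr rfl fun j _ => by ring

theorem nat_mul_mul_negPolylog (n : ℕ) {x : ℂ} (hx : ‖x‖ < 1) :
    n * x * negPolylog n x
      = ∑ j ∈ range (n + 1), j * n.choose j * (-1) ^ (n - j) * negPolylog j x
        - if n = 1 then x else 0 := by
  set S := ∑ j ∈ range (n + 1), (j : ℂ) * n.choose j * (-1) ^ (n - j) * negPolylog j x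
  -- `g m` is the term `r = m + 1` of `Σ_r n (r - 1)^{n-1} x^r` and the term `r = m` of `n x Li(x)`.
  set g : ℕ → ℂ := fun m => n * (m : ℂ) ^ (n - 1) * x ^ (m + 1)
  have hg : HasSum g S := by
    have := (hasSum_pnat_iff_hasSum_succ
      (f := fun m : ℕ => n * ((m : ℂ) + -1) ^ (n - 1) * x ^ m)).mp
        (hasSum_nat_mul_add_pow_pred_mul_pow n (-1) hx)
    simpa [g] using this
  have hg0 : g 0 = if n = 1 then x else 0 := by
    rcases eq_or_ne n 1 with rfl | hn
    · simp [g]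
    · simp only [g, if_neg hn, Nat.cast_zero, zero_add, pow_one]
      rcases eq_or_ne n 0 with rfl | hn0
      · simp
      · simp [zero_pow (show n - 1 ≠ 0 by omega)]
  have hpos : HasSum (fun r : ℕ+ => g r) (S - g 0) := hasSum_pnat_iff.mpr (by simpa using hg)
  rw [← hg0, ← hpos.tsum_eq, negPolylog, ← tsum_mul_left]
  exact tsum_congr fun r => by simp only [g]; ring

theorem nat_mul_inv_mul_negPolylog (n : ℕ) {x : ℂ} (hx : ‖x‖ < 1) (hx0 : x ≠ 0) :
    n * x⁻¹ * negPolylog n x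
      = n + ∑ j ∈ range (n + 1), j * n.choose j * negPolylog j x := by
  -- `h m` is the term `r = m` of `Σ_r n (r + 1)^{n-1} x^r` and the term `r = m + 1` of `n Li(x)/x`.
  set h : ℕ → ℂ := fun m => n * ((m : ℂ) + 1) ^ (n - 1) * x ^ m
  have hh : HasSum h (n + ∑ j ∈ range (n + 1), j * n.choose j * negPolylog j x) := by
    have := (hasSum_pnat_iff (f := h)).mp (hasSum_nat_mul_add_pow_pred_mul_pow n 1 hx)
    simp only [h, Nat.cast_zero, zero_add, one_pow, mul_one, pow_zero] at this
    rwa [add_comm] at this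
  rw [negPolylog, ← tsum_mul_left]
  refine ((hasSum_pnat_iff_hasSum_succ
    (f := fun m : ℕ => n * x⁻¹ * ((m : ℂ) ^ (n - 1) * x ^ m))).mpr
      (hh.congr_fun fun m => ?_)).tsum_eq
  simp only [h, Nat.cast_add, Nat.cast_one, pow_succ]
  field_simp

theorem norm_negPolylog_le (j : ℕ) {t : ℝ} (ht0 : 0 < t) (ht : t < 1) {x : ℂ} (hx : ‖x‖ ≤ t) :
    ‖negPolylog j x‖ ≤ ‖x‖ * (t⁻¹ * ∑' r : ℕ+, (r : ℝ) ^ (j - 1) * t ^ (r : ℕ)) := by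
  have ht' : Summable fun r : ℕ+ => (r : ℝ) ^ (j - 1) * t ^ (r : ℕ) := by
    have := summable_pow_mul_geometric_of_norm_lt_one (R := ℝ) (j - 1) (r := t)
      (by rwa [Real.norm_of_nonneg ht0.le])
    exact this.comp_injective PNat.coe_injective
  rw [← tsum_mul_left, ← tsum_mul_left]
  refine tsum_of_norm_bounded ((ht'.mul_left _).mul_left _).hasSum fun r => ?_
  have hpow : ‖x‖ ^ (r : ℕ) ≤ ‖x‖ * (t⁻¹ * t ^ (r : ℕ)) := by
    rw [← Nat.succ_pred_eq_of_pos r.pos, pow_succ', pow_succ', inv_mul_cancel_left₀ ht0.ne']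
    gcongr
  rw [norm_mul, norm_pow, norm_pow, Complex.norm_natCast]
  calc (r : ℝ) ^ (j - 1) * ‖x‖ ^ (r : ℕ) ≤ (r : ℝ) ^ (j - 1) * (‖x‖ * (t⁻¹ * t ^ (r : ℕ))) := by
        gcongr
    _ = _ := by ring

def lambertSeries (j : ℕ) (p q : ℂ) : ℂ := ∑' k : ℕ+, p ^ (k : ℕ) * negPolylog j (q ^ (k : ℕ))

theorem summable_lambertSeries (j : ℕ) {p q : ℂ} (hq0 : q ≠ 0) (hq : ‖q‖ < 1)
    (hpq : ‖p‖ * ‖q‖ < 1) :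
    Summable fun k : ℕ+ => p ^ (k : ℕ) * negPolylog j (q ^ (k : ℕ)) := by
  set C := ‖q‖⁻¹ * ∑' r : ℕ+, (r : ℝ) ^ (j - 1) * ‖q‖ ^ (r : ℕ)
  have hgeom : Summable fun k : ℕ+ => C * (‖p‖ * ‖q‖) ^ (k : ℕ) :=
    ((summable_geometric_of_lt_one (by positivity) hpq).comp_injective
      PNat.coe_injective).mul_left C
  refine Summable.of_norm_bounded hgeom fun k => ?_
  have hqk : ‖q ^ (k : ℕ)‖ ≤ ‖q‖ := by
    rw [norm_pow]; exact pow_le_of_le_one (norm_nonneg q) hq.le k.ne_zero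
  calc ‖p ^ (k : ℕ) * negPolylog j (q ^ (k : ℕ))‖
      ≤ ‖p‖ ^ (k : ℕ) * (‖q ^ (k : ℕ)‖ * C) := by
        rw [norm_mul, norm_pow]
        gcongr
        exact norm_negPolylog_le j (norm_pos_iff.mpr hq0) hq hqk
    _ = C * (‖p‖ * ‖q‖) ^ (k : ℕ) := by rw [norm_pow, mul_pow]; ring

theorem hasSum_pnat_geometric {y : ℂ} (hy : ‖y‖ < 1) :
    HasSum (fun k : ℕ+ => y ^ (k : ℕ)) (y / (1 - y)) := by
  have hy1 : 1 - y ≠ 0 := sub_ne_zero.mpr fun h => by simp [← h] at hy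
  refine (hasSum_pnat_iff (f := fun m : ℕ => y ^ m)).mpr ?_
  rw [pow_zero, div_add_one hy1, add_sub_cancel, one_div]
  exact hasSum_geometric_of_norm_lt_one hy

theorem nat_mul_lambertSeries_mul (n : ℕ) {p q : ℂ} (hq0 : q ≠ 0) (hq : ‖q‖ < 1)
    (hpq : ‖p‖ * ‖q‖ < 1) :
    n * lambertSeries n (p * q) q
      = ∑ j ∈ range (n + 1), j * n.choose j * (-1) ^ (n - j) * lambertSeries j p q
        - if n = 1 then p * q / (1 - p * q) else 0 := by
  have hsum := hasSum_sum (s := range (n + 1)) fun j _ =>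
    (summable_lambertSeries j hq0 hq hpq).hasSum.mul_left ((j : ℂ) * n.choose j * (-1) ^ (n - j))
  have hgeom : HasSum (fun k : ℕ+ => if n = 1 then (p * q) ^ (k : ℕ) else 0)
      (if n = 1 then p * q / (1 - p * q) else 0) := by
    split_ifs
    · exact hasSum_pnat_geometric (by rwa [norm_mul])
    · exact hasSum_zero
  rw [lambertSeries, ← tsum_mul_left]
  refine ((hsum.sub hgeom).congr_fun fun k => ?_).tsum_eq
  have hqk : ‖q ^ (k : ℕ)‖ < 1 := by
    rw [norm_pow]; exact pow_lt_one₀ (norm_nonneg _) hq k.ne_zero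
  calc (n : ℂ) * ((p * q) ^ (k : ℕ) * negPolylog n (q ^ (k : ℕ)))
      = p ^ (k : ℕ) * (n * q ^ (k : ℕ) * negPolylog n (q ^ (k : ℕ))) := by ring
    _ = _ := by
      rw [nat_mul_mul_negPolylog n hqk, mul_sub, Finset.mul_sum, mul_ite, mul_zero, ← mul_pow]
      exact congrArg₂ _ (Finset.sum_congr rfl fun j _ => by ring) rfl

theorem nat_mul_lambertSeries_div (n : ℕ) {p q : ℂ} (hq0 : q ≠ 0) (hq : ‖q‖ < 1)
    (hp : ‖p‖ < 1) :
    n * lambertSeries n (p / q) q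
      = n * (p / (1 - p)) + ∑ j ∈ range (n + 1), j * n.choose j * lambertSeries j p q := by
  have hpq : ‖p‖ * ‖q‖ < 1 := by nlinarith [norm_nonneg p, norm_nonneg q]
  have hsum := hasSum_sum (s := range (n + 1)) fun j _ =>
    (summable_lambertSeries j hq0 hq hpq).hasSum.mul_left ((j : ℂ) * n.choose j)
  rw [lambertSeries, ← tsum_mul_left]
  refine ((((hasSum_pnat_geometric hp).mul_left (n : ℂ)).add hsum).congr_fun fun k => ?_).tsum_eq
  have hqk : ‖q ^ (k : ℕ)‖ < 1 := by
    rw [norm_pow]; exact pow_lt_one₀ (norm_nonneg _) hq k.ne_zero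
  calc (n : ℂ) * ((p / q) ^ (k : ℕ) * negPolylog n (q ^ (k : ℕ)))
      = p ^ (k : ℕ) * (n * (q ^ (k : ℕ))⁻¹ * negPolylog n (q ^ (k : ℕ))) := by
        rw [div_pow, div_eq_mul_inv]; ring
    _ = _ := by
      rw [nat_mul_inv_mul_negPolylog n hqk (pow_ne_zero _ hq0), mul_add, Finset.mul_sum]
      exact congrArg₂ _ (by ring) (Finset.sum_congr rfl fun j _ => by ring)

/-- `J_n` in the variables `p = e^{2πiz}`, `q = e^{2πiτ}`, with each inner sum over `r` summed to
a `negPolylog`. -/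
def deformedEis (n : ℕ) (p q : ℂ) : ℂ :=
  (if n = 1 then p / (p - 1) else 0) + bernoulli n
    - n * (lambertSeries n p q + (-1) ^ n * lambertSeries n p⁻¹ q)

theorem lt_one_of_lt_of_lt_inv {a b : ℝ} (hab : a < b) (hba : b < a⁻¹) : a < 1 := by
  by_contra! h
  linarith [inv_le_one_of_one_le₀ h]

theorem tsum_tsum_eq_lambertSeries_add (n : ℕ) {p q : ℂ} (hq0 : q ≠ 0) (h1 : ‖q‖ < ‖p‖)
    (h2 : ‖p‖ < ‖q‖⁻¹) :
    ∑' (k : ℕ+) (r : ℕ+), (r : ℂ) ^ (n - 1) * (p ^ (k : ℕ) + (-1) ^ n * p ^ (-(k : ℤ)))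
        * q ^ ((k : ℕ) * (r : ℕ))
      = lambertSeries n p q + (-1) ^ n * lambertSeries n p⁻¹ q := by
  have hq : ‖q‖ < 1 := lt_one_of_lt_of_lt_inv h1 h2
  have hp0 : 0 < ‖p‖ := (norm_nonneg q).trans_lt h1
  have hpq : ‖p‖ * ‖q‖ < 1 :=
    (lt_inv_mul_iff₀' (norm_pos_iff.mpr hq0)).mp (by rwa [mul_one])
  have hpq' : ‖p⁻¹‖ * ‖q‖ < 1 := by rwa [norm_inv, inv_mul_lt_one₀ hp0]
  rw [lambertSeries, lambertSeries, ← tsum_mul_left,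
    ← (summable_lambertSeries n hq0 hq hpq).tsum_add
      ((summable_lambertSeries n hq0 hq hpq').mul_left _)]
  refine tsum_congr fun k => ?_
  rw [← mul_assoc, ← add_mul, negPolylog, ← tsum_mul_left]
  refine tsum_congr fun r => ?_
  rw [zpow_neg, zpow_natCast, inv_pow, pow_mul]
  ring

theorem Jdef_eq_deformedEis (n : ℕ) {z τ : ℂ} (h1 : ‖qq τ‖ < ‖pp z‖) (h2 : ‖pp z‖ < ‖qq τ‖⁻¹) :
    Jdef n z τ = deformedEis n (pp z) (qq τ) := by
  rw [Jdef, deformedEis, tsum_tsum_eq_lambertSeries_add n (q := qq τ) (Complex.exp_ne_zero _) h1 h2]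

theorem sum_choose_mul_neg_one_pow_mul_bernoulli (n : ℕ) :
    ∑ j ∈ range (n + 1), (n.choose j : ℚ) * (-1) ^ (n - j) * bernoulli j
      = bernoulli n + (-1) ^ n * n := by
  have hsign : ∀ j ∈ range (n + 1),
      (n.choose j : ℚ) * (-1) ^ (n - j) * bernoulli j = (-1) ^ n * (n.choose j * bernoulli' j) := by
    intro j hj
    rw [bernoulli, ← pow_sub_mul_pow (-1 : ℚ) (Finset.mem_range_succ_iff.mp hj)]
    ring
  rw [Finset.sum_congr rfl hsign, ← Finset.mul_sum, Finset.sum_range_succ, sum_bernoulli',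
    Nat.choose_self, bernoulli]
  push_cast
  ring

theorem neg_one_pow_mul_bernoulli_of_ne_one {n : ℕ} (hn : n ≠ 1) :
    (-1) ^ n * bernoulli n = bernoulli n := by
  rw [← bernoulli'_eq_bernoulli, bernoulli_eq_bernoulli'_of_ne_one hn]

theorem deformedEis_inv (n : ℕ) {p q : ℂ} (hp0 : p ≠ 0) (hp1 : p ≠ 1) :
    deformedEis n p⁻¹ q = (-1) ^ n * deformedEis n p q := by
  have hconst : (if n = 1 then p⁻¹ / (p⁻¹ - 1) else 0) + (bernoulli n : ℂ)
      = (-1) ^ n * ((if n = 1 then p / (p - 1) else 0) + bernoulli n) := by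
    rcases eq_or_ne n 1 with rfl | hn
    · have : p - 1 ≠ 0 := sub_ne_zero.mpr hp1
      have : 1 - p ≠ 0 := sub_ne_zero.mpr hp1.symm
      simp only [if_pos, bernoulli_one]
      field_simp
      push_cast
      ring
    · simp only [if_neg hn, zero_add]
      exact_mod_cast (neg_one_pow_mul_bernoulli_of_ne_one hn).symm
  rw [deformedEis, deformedEis, hconst, inv_inv]
  linear_combination ((n : ℂ) * lambertSeries n p⁻¹ q) * neg_one_pow_mul_neg_one_pow_self (R := ℂ) n

theorem sum_choose_mul_neg_one_pow_mul_deformedEis (n : ℕ) (p q : ℂ) :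
    ∑ j ∈ range (n + 1), n.choose j * (-1) ^ (n - j) * deformedEis j p q
      = n * (-1) ^ (n - 1) * (p / (p - 1)) + bernoulli n + (-1) ^ n * n
        - ∑ j ∈ range (n + 1), j * n.choose j * (-1) ^ (n - j) * lambertSeries j p q
        - (-1) ^ n * ∑ j ∈ range (n + 1), j * n.choose j * lambertSeries j p⁻¹ q := by
  have hpole : ∑ j ∈ range (n + 1), (n.choose j : ℂ) * (-1) ^ (n - j)
      * (if j = 1 then p / (p - 1) else 0) = n * (-1) ^ (n - 1) * (p / (p - 1)) := by
    rw [Finset.sum_eq_single 1 (fun j _ hj => by simp [hj]) (fun h => by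
      simp [Nat.choose_eq_zero_of_lt (show n < 1 by simpa using h)])]
    simp
  have hbern : ∑ j ∈ range (n + 1), (n.choose j : ℂ) * (-1) ^ (n - j) * bernoulli j
      = bernoulli n + (-1) ^ n * n := by
    exact_mod_cast sum_choose_mul_neg_one_pow_mul_bernoulli n
  have hsign : ∑ j ∈ range (n + 1), (n.choose j : ℂ) * (-1) ^ (n - j)
      * (j * ((-1) ^ j * lambertSeries j p⁻¹ q))
      = (-1) ^ n * ∑ j ∈ range (n + 1), j * n.choose j * lambertSeries j p⁻¹ q := by
    rw [Finset.mul_sum]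
    refine Finset.sum_congr rfl fun j hj => ?_
    rw [← pow_sub_mul_pow (-1 : ℂ) (Finset.mem_range_succ_iff.mp hj)]
    ring
  have hexpand : ∀ j, (n.choose j : ℂ) * (-1) ^ (n - j) * deformedEis j p q
      = n.choose j * (-1) ^ (n - j) * (if j = 1 then p / (p - 1) else 0)
        + n.choose j * (-1) ^ (n - j) * bernoulli j
        - j * n.choose j * (-1) ^ (n - j) * lambertSeries j p q
        - n.choose j * (-1) ^ (n - j) * (j * ((-1) ^ j * lambertSeries j p⁻¹ q)) := by
    intro j
    rw [deformedEis]
    ring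
  rw [Finset.sum_congr rfl fun j _ => hexpand j, Finset.sum_sub_distrib, Finset.sum_sub_distrib,
    Finset.sum_add_distrib, hpole, hbern, hsign]
  ring

theorem deformedEis_mul (n : ℕ) {p q : ℂ} (hq0 : q ≠ 0) (hp : 1 < ‖p‖) (hpq : ‖p‖ * ‖q‖ < 1) :
    deformedEis n (p * q) q
      = ∑ j ∈ range (n + 1), n.choose j * (-1) ^ (n - j) * deformedEis j p q := by
  obtain _ | m := n
  · simp [deformedEis]
  have hq : ‖q‖ < 1 := by nlinarith [norm_nonneg q]
  have hpinv : ‖p⁻¹‖ < 1 := by rw [norm_inv]; exact inv_lt_one_of_one_lt₀ hp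
  have hp0 : p ≠ 0 := norm_pos_iff.mp (one_pos.trans hp)
  have hp1 : p - 1 ≠ 0 := sub_ne_zero.mpr (by rintro rfl; simp at hp)
  have hA := nat_mul_lambertSeries_mul (m + 1) hq0 hq hpq
  have hB := nat_mul_lambertSeries_div (m + 1) hq0 hq hpinv
  have hgeom : p⁻¹ / (1 - p⁻¹) = p / (p - 1) - 1 := by field_simp; ring
  have hpole : (if m + 1 = 1 then p * q / (1 - p * q) else 0)
      = -if m + 1 = 1 then p * q / (p * q - 1) else 0 := by
    split_ifs
    · rw [← neg_sub, div_neg]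
    · rw [neg_zero]
  rw [hpole] at hA
  rw [sum_choose_mul_neg_one_pow_mul_deformedEis, deformedEis, mul_inv, ← div_eq_mul_inv,
    Nat.add_sub_cancel]
  push_cast at hA hB ⊢
  linear_combination (-1 : ℂ) * hA - (-1) ^ (m + 1) * hB - (-1) ^ (m + 1) * (m + 1) * hgeom

theorem deformedEis_div (n : ℕ) {p q : ℂ} (hq0 : q ≠ 0) (hp : ‖p‖ < 1) (hqp : ‖q‖ < ‖p‖) :
    deformedEis n (p / q) q = ∑ j ∈ range (n + 1), n.choose j * deformedEis j p q := by
  have hp0 : 0 < ‖p‖ := (norm_nonneg q).trans_lt hqp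
  have hp1 : p ≠ 1 := by rintro rfl; simp at hp
  have hpinv : 1 < ‖p⁻¹‖ := by rw [norm_inv]; exact one_lt_inv₀ hp0 |>.mpr hp
  have hpinvq : ‖p⁻¹‖ * ‖q‖ < 1 := by rwa [norm_inv, inv_mul_lt_one₀ hp0]
  have hpq1 : p⁻¹ * q ≠ 1 := fun h => by
    have := congrArg norm h
    rw [norm_mul, norm_one] at this
    linarith
  rw [show p / q = (p⁻¹ * q)⁻¹ by rw [mul_inv, inv_inv, div_eq_mul_inv],
    deformedEis_inv n (mul_ne_zero (inv_ne_zero (norm_pos_iff.mp hp0)) hq0) hpq1,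
    deformedEis_mul n hq0 hpinv hpinvq, Finset.mul_sum]
  refine Finset.sum_congr rfl fun j hj => ?_
  rw [deformedEis_inv j (norm_pos_iff.mp hp0) hp1]
  have hsign : ((-1 : ℂ) ^ n) * ((-1) ^ (n - j) * (-1) ^ j) = 1 := by
    rw [pow_sub_mul_pow _ (Finset.mem_range_succ_iff.mp hj), neg_one_pow_mul_neg_one_pow_self]
  linear_combination (n.choose j * deformedEis j p q) * hsign

theorem abs_le_one_of_mul_zpow_mem_annulus {a b : ℝ} {lam : ℤ} (ha0 : 0 < a) (ha1 : a < 1)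
    (h1 : a < b) (h2 : b < a⁻¹) (h1' : a < b * a ^ lam) (h2' : b * a ^ lam < a⁻¹) :
    |lam| ≤ 1 := by
  have hlam : 0 < a ^ lam := zpow_pos ha0 lam
  have hlo : a ^ (2 : ℤ) < a ^ lam := by
    have := h1'.trans (mul_lt_mul_of_pos_right h2 hlam)
    rw [zpow_two]
    rwa [lt_inv_mul_iff₀ ha0] at this
  have hhi : a ^ lam < a ^ (-2 : ℤ) := by
    have := (mul_lt_mul_of_pos_right h1 hlam).trans h2'
    rw [zpow_neg, zpow_two, mul_inv]
    rwa [← lt_inv_mul_iff₀ ha0] at this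
  rw [zpow_lt_zpow_iff_right_of_lt_one₀ ha0 ha1] at hlo hhi
  rw [abs_le]
  omega

theorem pp_add_int_mul_add_int (z τ : ℂ) (lam mu : ℤ) :
    pp (z + lam * τ + mu) = pp z * qq τ ^ lam := by
  rw [pp, pp, qq, ← Complex.exp_int_mul, ← Complex.exp_add,
    show 2 * (Real.pi : ℂ) * I * (z + lam * τ + mu)
      = 2 * Real.pi * I * z + lam * (2 * Real.pi * I * τ) + mu * (2 * Real.pi * I) by ring,
    Complex.exp_add, Complex.exp_int_mul_two_pi_mul_I, mul_one]

theorem deformedEis_mul_zpow (n : ℕ) {p q : ℂ} (lam : ℤ) (hq0 : q ≠ 0) (h1 : ‖q‖ < ‖p‖)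
    (h2 : ‖p‖ < ‖q‖⁻¹) (h1' : ‖q‖ < ‖p * q ^ lam‖) (h2' : ‖p * q ^ lam‖ < ‖q‖⁻¹) :
    deformedEis n (p * q ^ lam) q
      = ∑ k ∈ range (n + 1),
          (-1) ^ (n + k) * n.choose k * (lam : ℂ) ^ (n - k) * deformedEis k p q := by
  have hq : 0 < ‖q‖ := norm_pos_iff.mpr hq0
  rw [norm_mul, norm_zpow] at h1' h2'
  have hlam := abs_le_one_of_mul_zpow_mem_annulus hq (lt_one_of_lt_of_lt_inv h1 h2) h1 h2 h1' h2'
  obtain rfl | rfl | rfl : lam = -1 ∨ lam = 0 ∨ lam = 1 := by rw [abs_le] at hlam; omega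
  · rw [zpow_neg_one] at h2' ⊢
    have hp : ‖p‖ < 1 :=
      lt_of_mul_lt_mul_right (h2'.trans_eq (one_mul _).symm) (inv_nonneg.mpr hq.le)
    rw [← div_eq_mul_inv, deformedEis_div n hq0 hp h1]
    refine Finset.sum_congr rfl fun k hk => ?_
    rw [neg_one_pow_add_eq_neg_one_pow_sub (Finset.mem_range_succ_iff.mp hk), Int.cast_neg,
      Int.cast_one]
    linear_combination (-(n.choose k * deformedEis k p q : ℂ))
      * neg_one_pow_mul_neg_one_pow_self (R := ℂ) (n - k)
  · rw [zpow_zero, mul_one, Finset.sum_eq_single_of_mem n (Finset.self_mem_range_succ n)]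
    · simp [neg_one_pow_mul_neg_one_pow_self, pow_add]
    · intro k hk hkn
      rw [Int.cast_zero, zero_pow (by have := Finset.mem_range_succ_iff.mp hk; omega)]
      ring
  · rw [zpow_one] at h1' h2' ⊢
    rw [deformedEis_mul n hq0 ((lt_mul_iff_one_lt_left hq).mp h1')
      ((lt_inv_mul_iff₀' hq).mp (by rwa [mul_one]))]
    refine Finset.sum_congr rfl fun k hk => ?_
    rw [neg_one_pow_add_eq_neg_one_pow_sub (Finset.mem_range_succ_iff.mp hk), Int.cast_one,
      one_pow, mul_one, mul_comm ((-1 : ℂ) ^ (n - k))]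

theorem deformed_eisenstein_elliptic_general (n : ℕ) (lam mu : ℤ) (z τ : ℂ)
    (h1 : ‖qq τ‖ < ‖pp z‖)
    (h2 : ‖pp z‖ < (‖qq τ‖)⁻¹)
    (h1' : ‖qq τ‖ < ‖pp (z + lam * τ + mu)‖)
    (h2' : ‖pp (z + lam * τ + mu)‖ < (‖qq τ‖)⁻¹) :
    Jdef n (z + lam * τ + mu) τ
      = ∑ k ∈ Finset.range (n + 1),
          (-1 : ℂ) ^ (n + k) * (n.choose k : ℂ) * (lam : ℂ) ^ (n - k) * Jdef k z τ := by
  have hq0 : qq τ ≠ 0 := Complex.exp_ne_zero _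
  rw [Jdef_eq_deformedEis n h1' h2']
  rw [pp_add_int_mul_add_int] at h1' h2' ⊢
  rw [deformedEis_mul_zpow n lam hq0 h1 h2 h1' h2']
  exact Finset.sum_congr rfl fun k _ => by rw [Jdef_eq_deformedEis k h1 h2]

/-- elliptic transformation law of the deformed Eisenstein series. -/
theorem deformed_eisenstein_elliptic (n : ℕ) (lam mu : ℤ) (z τ : ℂ) (hτ : 0 < τ.im)
    (h1 : ‖qq τ‖ < ‖pp z‖)
    (h2 : ‖pp z‖ < (‖qq τ‖)⁻¹)
    (hp : pp z ≠ 1)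
    (h1' : ‖qq τ‖ < ‖pp (z + lam * τ + mu)‖)
    (h2' : ‖pp (z + lam * τ + mu)‖ < (‖qq τ‖)⁻¹)
    (hp' : pp (z + lam * τ + mu) ≠ 1) :
    Jdef n (z + lam * τ + mu) τ
      = ∑ k ∈ Finset.range (n + 1),
          (-1 : ℂ) ^ (n + k) * (n.choose k : ℂ) * (lam : ℂ) ^ (n - k) * Jdef k z τ :=
  deformed_eisenstein_elliptic_general n lam mu z τ h1 h2 h1' h2'
end
end

section
/- The logarithmic derivative of the first Jacobi theta function equals J_1: (1/2πi)·(∂θ_1/∂z)(z,τ) / θ_1(z,τ) = J_1(z,τ). -/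
/-!
With `p = e^{2πiz}` one has `θ₁(z) = c · e^{-πiz} (p - 1) Θ(p)`, where
`Θ(x) = ∏_{m ≥ 1} (1 - q^m)(1 - x q^m)(1 - x⁻¹ q^m)`. On the annulus `|q| < |x| < |q|⁻¹` every
factor of `Θ` is `1 + O(|q|^{m-1})` uniformly, so the product converges locally uniformly and its
logarithmic derivative is the sum of those of its factors. After multiplying by `x`, the `m`-th
term is `x⁻¹q^m / (1 - x⁻¹q^m) - x q^m / (1 - x q^m)`; expanding both fractions as geometric
series and exchanging the absolutely convergent double sums gives `-∑_{k,r} (x^k - x^{-k}) q^{kr}`.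
The factors `e^{-πiz}` and `p - 1` contribute `-1/2 + p/(p - 1)` after dividing by `2πi`.
-/

open Complex

noncomputable section

open Real

theorem norm_mul_one_sub_sub_one_le {R : Type*} [NormedRing R] (y c : R) :
    ‖y * (1 - c) - 1‖ ≤ ‖y - 1‖ + ‖y‖ * ‖c‖ := by
  rw [show y * (1 - c) - 1 = (y - 1) - y * c by noncomm_ring]
  exact (norm_sub_le _ _).trans (add_le_add_right (norm_mul_le _ _) _)

theorem norm_one_sub_mul_one_sub_mul_one_sub_sub_one_le {R : Type*} [NormedRing R]
    [NormOneClass R] {a b c : R} {r : ℝ} (ha : ‖a‖ ≤ r) (hb : ‖b‖ ≤ r) (hc : ‖c‖ ≤ r)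
    (hr : r ≤ 1) : ‖(1 - a) * (1 - b) * (1 - c) - 1‖ ≤ 7 * r := by
  have h1a : ‖1 - a‖ ≤ 1 + r := (norm_sub_le _ _).trans (by rw [norm_one]; linarith)
  have hab : ‖(1 - a) * (1 - b) - 1‖ ≤ 3 * r := by
    refine (norm_mul_one_sub_sub_one_le _ _).trans ?_
    rw [sub_sub_cancel_left, norm_neg]
    nlinarith [norm_nonneg b, norm_nonneg (1 - a)]
  have hab' : ‖(1 - a) * (1 - b)‖ ≤ 1 + 3 * r := by
    have := norm_le_norm_sub_add ((1 - a) * (1 - b)) 1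
    rw [norm_one] at this
    linarith
  refine (norm_mul_one_sub_sub_one_le _ _).trans ?_
  nlinarith [norm_nonneg c, norm_nonneg ((1 - a) * (1 - b))]

theorem one_sub_ne_zero_of_norm_lt_one {R : Type*} [NormedRing R] [NormOneClass R] {a : R}
    (h : ‖a‖ < 1) : 1 - a ≠ 0 :=
  sub_ne_zero.mpr fun h1 => by simp [← h1] at h

theorem summable_pow_pnat_sub_one {r : ℝ} (h0 : 0 ≤ r) (h1 : r < 1) :
    Summable (fun m : ℕ+ => r ^ ((m : ℕ) - 1)) := by
  rw [summable_pnat_iff_summable_succ (f := fun n => r ^ (n - 1))]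
  simpa using summable_geometric_of_lt_one h0 h1

section Lambert

variable {𝕜 : Type*} [NormedField 𝕜] [CompleteSpace 𝕜]

omit [CompleteSpace 𝕜] in
theorem hasSum_geometric_pnat {y : 𝕜} (hy : ‖y‖ < 1) :
    HasSum (fun k : ℕ+ => y ^ (k : ℕ)) (y / (1 - y)) := by
  rw [hasSum_pnat_iff_hasSum_succ (f := fun k => y ^ k)]
  simpa [pow_succ', div_eq_mul_inv] using (hasSum_geometric_of_norm_lt_one hy).mul_left y

theorem summable_pow_mul_pow_mul {a q : 𝕜} (haq : ‖a * q‖ < 1) (hq : ‖q‖ < 1) :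
    Summable (fun p : ℕ+ × ℕ+ => a ^ (p.1 : ℕ) * q ^ ((p.1 : ℕ) * p.2)) := by
  have hk : Summable (fun k : ℕ+ => ‖a * q‖ ^ (k : ℕ)) :=
    (summable_geometric_of_lt_one (norm_nonneg _) haq).comp_injective PNat.coe_injective
  have hg : Summable (fun p : ℕ+ × ℕ+ => ‖a * q‖ ^ (p.1 : ℕ) * ‖q‖ ^ ((p.2 : ℕ) - 1)) :=
    (hk.mul_of_nonneg (summable_pow_pnat_sub_one (norm_nonneg q) hq)
      (fun _ => pow_nonneg (norm_nonneg _) _) (fun _ => pow_nonneg (norm_nonneg _) _) :)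
  refine hg.of_norm_bounded fun ⟨k, m⟩ => ?_
  have hexp : (k : ℕ) + ((m : ℕ) - 1) ≤ k * m := by
    obtain ⟨n, hn⟩ := Nat.exists_eq_add_one.mpr m.pos
    rw [hn, Nat.add_sub_cancel]
    nlinarith [k.pos]
  calc ‖a ^ (k : ℕ) * q ^ ((k : ℕ) * m)‖ = ‖a‖ ^ (k : ℕ) * ‖q‖ ^ ((k : ℕ) * m) := by
        rw [norm_mul, norm_pow, norm_pow]
    _ ≤ ‖a‖ ^ (k : ℕ) * ‖q‖ ^ ((k : ℕ) + ((m : ℕ) - 1)) := by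
        gcongr ‖a‖ ^ (k : ℕ) * ?_
        exact pow_le_pow_of_le_one (norm_nonneg q) hq.le hexp
    _ = ‖a * q‖ ^ (k : ℕ) * ‖q‖ ^ ((m : ℕ) - 1) := by rw [norm_mul, mul_pow, pow_add, mul_assoc]

theorem hasSum_mul_pow_div_one_sub_mul_pow {a q : 𝕜} (haq : ‖a * q‖ < 1) (hq : ‖q‖ < 1) :
    HasSum (fun m : ℕ+ => a * q ^ (m : ℕ) / (1 - a * q ^ (m : ℕ)))
      (∑' p : ℕ+ × ℕ+, a ^ (p.1 : ℕ) * q ^ ((p.1 : ℕ) * p.2)) := by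
  rw [← (Equiv.prodComm ℕ+ ℕ+).tsum_eq]
  refine ((summable_pow_mul_pow_mul haq hq).comp_injective
    (Equiv.prodComm ℕ+ ℕ+).injective).hasSum.prod_fiberwise fun m => ?_
  have hm : ‖a * q ^ (m : ℕ)‖ < 1 := by
    calc ‖a * q ^ (m : ℕ)‖ ≤ ‖a * q‖ := by
          rw [norm_mul, norm_mul, norm_pow]
          gcongr
          exact pow_le_of_le_one (norm_nonneg q) hq.le m.ne_zero
      _ < 1 := haq
  simpa [mul_pow, ← pow_mul, mul_comm] using hasSum_geometric_pnat hm

end Lambert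

theorem mul_logDeriv_one_sub_mul_one_sub_inv_mul {𝕜 : Type*} [NontriviallyNormedField 𝕜]
    {c Q x : 𝕜} (hx : x ≠ 0) (hc : c ≠ 0) (h₁ : 1 - x * Q ≠ 0) (h₂ : 1 - x⁻¹ * Q ≠ 0) :
    x * logDeriv (fun y => c * (1 - y * Q) * (1 - y⁻¹ * Q)) x =
      x⁻¹ * Q / (1 - x⁻¹ * Q) - x * Q / (1 - x * Q) := by
  have hd : HasDerivAt (fun y => c * (1 - y * Q) * (1 - y⁻¹ * Q))
      (c * (-Q) * (1 - x⁻¹ * Q) + c * (1 - x * Q) * (-(-(x ^ 2)⁻¹ * Q))) x :=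
    (((((hasDerivAt_id x).mul_const Q).const_sub 1).const_mul c).mul
      (((hasDerivAt_inv hx).mul_const Q).const_sub 1)).congr_deriv (by simp)
  have h₂' : x - Q ≠ 0 := by
    rintro hQ
    rw [← sub_eq_zero.mp hQ, inv_mul_cancel₀ hx, sub_self] at h₂
    exact h₂ rfl
  rw [logDeriv_apply, hd.deriv]
  field_simp
  ring

def qAnnulus (q : ℂ) : Set ℂ := {x | ‖q‖ < ‖x‖ ∧ ‖x‖ < ‖q‖⁻¹}

namespace qAnnulus

variable {q x : ℂ}

theorem isOpen (q : ℂ) : IsOpen (qAnnulus q) :=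
  (isOpen_lt continuous_const continuous_norm).inter (isOpen_lt continuous_norm continuous_const)

theorem norm_pos (hx : x ∈ qAnnulus q) : 0 < ‖q‖ :=
  inv_pos.mp ((norm_nonneg x).trans_lt hx.2)

theorem inv_mem (hx : x ∈ qAnnulus q) : x⁻¹ ∈ qAnnulus q := by
  have hq := norm_pos hx
  constructor
  · rw [norm_inv, lt_inv_comm₀ hq (hq.trans hx.1)]
    exact hx.2
  · rw [norm_inv]
    exact inv_strictAnti₀ hq hx.1

theorem norm_lt_one (hx : x ∈ qAnnulus q) : ‖q‖ < 1 := by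
  by_contra! h1
  exact (hx.1.trans hx.2).not_ge ((inv_le_one_of_one_le₀ h1).trans h1)

theorem ne_zero (hx : x ∈ qAnnulus q) : x ≠ 0 :=
  norm_pos_iff.mp ((norm_pos hx).trans hx.1)

theorem norm_mul_pow_lt (hx : x ∈ qAnnulus q) (m : ℕ+) :
    ‖x * q ^ (m : ℕ)‖ < ‖q‖ ^ ((m : ℕ) - 1) := by
  have hq := norm_pos hx
  rw [norm_mul, norm_pow, pow_sub₀ _ hq.ne' m.pos, pow_one, mul_comm (‖q‖ ^ _)]
  exact mul_lt_mul_of_pos_right hx.2 (by positivity)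

theorem norm_pow_lt (hx : x ∈ qAnnulus q) (m : ℕ+) :
    ‖q ^ (m : ℕ)‖ < ‖q‖ ^ ((m : ℕ) - 1) := by
  rw [norm_pow]
  exact pow_lt_pow_right_of_lt_one₀ (norm_pos hx) (norm_lt_one hx) (Nat.sub_one_lt m.pos.ne')

theorem pow_sub_one_le_one (hx : x ∈ qAnnulus q) (m : ℕ+) : ‖q‖ ^ ((m : ℕ) - 1) ≤ 1 :=
  pow_le_one₀ (norm_nonneg q) (norm_lt_one hx).le

theorem one_sub_pow_ne_zero (hx : x ∈ qAnnulus q) (m : ℕ+) : 1 - q ^ (m : ℕ) ≠ 0 :=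
  one_sub_ne_zero_of_norm_lt_one ((norm_pow_lt hx m).trans_le (pow_sub_one_le_one hx m))

theorem one_sub_mul_pow_ne_zero (hx : x ∈ qAnnulus q) (m : ℕ+) : 1 - x * q ^ (m : ℕ) ≠ 0 :=
  one_sub_ne_zero_of_norm_lt_one ((norm_mul_pow_lt hx m).trans_le (pow_sub_one_le_one hx m))

end qAnnulus

def thetaFactor (q : ℂ) (m : ℕ+) (x : ℂ) : ℂ :=
  (1 - q ^ (m : ℕ)) * (1 - x * q ^ (m : ℕ)) * (1 - x⁻¹ * q ^ (m : ℕ))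

def thetaProd (q x : ℂ) : ℂ := ∏' m : ℕ+, thetaFactor q m x

section thetaProd

variable {q x : ℂ}

theorem norm_thetaFactor_sub_one_le (hx : x ∈ qAnnulus q) (m : ℕ+) :
    ‖thetaFactor q m x - 1‖ ≤ 7 * ‖q‖ ^ ((m : ℕ) - 1) :=
  norm_one_sub_mul_one_sub_mul_one_sub_sub_one_le (qAnnulus.norm_pow_lt hx m).le
    (qAnnulus.norm_mul_pow_lt hx m).le (qAnnulus.norm_mul_pow_lt (qAnnulus.inv_mem hx) m).le
    (qAnnulus.pow_sub_one_le_one hx m)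

theorem thetaFactor_ne_zero (hx : x ∈ qAnnulus q) (m : ℕ+) : thetaFactor q m x ≠ 0 :=
  mul_ne_zero (mul_ne_zero (qAnnulus.one_sub_pow_ne_zero hx m)
    (qAnnulus.one_sub_mul_pow_ne_zero hx m))
    (qAnnulus.one_sub_mul_pow_ne_zero (qAnnulus.inv_mem hx) m)

theorem differentiableOn_thetaFactor (q : ℂ) (m : ℕ+) :
    DifferentiableOn ℂ (thetaFactor q m) (qAnnulus q) := by
  unfold thetaFactor
  fun_prop (disch := exact fun x hx => qAnnulus.ne_zero hx)

theorem multipliableLocallyUniformlyOn_thetaFactor (hq : ‖q‖ < 1) :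
    MultipliableLocallyUniformlyOn (thetaFactor q) (qAnnulus q) := by
  simpa using Summable.multipliableLocallyUniformlyOn_one_add (qAnnulus.isOpen q)
    ((summable_pow_pnat_sub_one (norm_nonneg q) hq).mul_left 7)
    (f := fun m x => thetaFactor q m x - 1)
    (.of_forall fun m x hx => norm_thetaFactor_sub_one_le hx m)
    (fun m => (differentiableOn_thetaFactor q m).continuousOn.sub continuousOn_const)

theorem differentiableOn_thetaProd (hq : ‖q‖ < 1) :
    DifferentiableOn ℂ (thetaProd q) (qAnnulus q) :=
  (multipliableLocallyUniformlyOn_thetaFactor hq).hasProdLocallyUniformlyOn.differentiableOn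
    (.of_forall fun s => by
      simpa [Finset.prod_fn] using
        DifferentiableOn.finsetProd fun m _ => differentiableOn_thetaFactor q m)
    (qAnnulus.isOpen q)

theorem thetaProd_ne_zero (hx : x ∈ qAnnulus q) : thetaProd q x ≠ 0 := by
  have hu := (summable_pow_pnat_sub_one (norm_nonneg q) (qAnnulus.norm_lt_one hx)).mul_left 7
  simpa [thetaProd] using tprod_one_add_ne_zero_of_summable
    (f := fun m => thetaFactor q m x - 1) (fun m => by simpa using thetaFactor_ne_zero hx m)
    (hu.of_nonneg_of_le (fun m => norm_nonneg _) (fun m => norm_thetaFactor_sub_one_le hx m))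

theorem mul_logDeriv_thetaFactor (hx : x ∈ qAnnulus q) (m : ℕ+) :
    x * logDeriv (thetaFactor q m) x =
      x⁻¹ * q ^ (m : ℕ) / (1 - x⁻¹ * q ^ (m : ℕ)) - x * q ^ (m : ℕ) / (1 - x * q ^ (m : ℕ)) :=
  mul_logDeriv_one_sub_mul_one_sub_inv_mul (qAnnulus.ne_zero hx)
    (qAnnulus.one_sub_pow_ne_zero hx m) (qAnnulus.one_sub_mul_pow_ne_zero hx m)
    (qAnnulus.one_sub_mul_pow_ne_zero (qAnnulus.inv_mem hx) m)

theorem mul_logDeriv_thetaProd (hx : x ∈ qAnnulus q) :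
    x * logDeriv (thetaProd q) x =
      -∑' (k : ℕ+) (r : ℕ+), (x ^ (k : ℕ) - x⁻¹ ^ (k : ℕ)) * q ^ ((k : ℕ) * r) := by
  have hq := qAnnulus.norm_lt_one hx
  have hxq : ‖x * q‖ < 1 := by simpa using qAnnulus.norm_mul_pow_lt hx 1
  have hxq' : ‖x⁻¹ * q‖ < 1 := by simpa using qAnnulus.norm_mul_pow_lt (qAnnulus.inv_mem hx) 1
  have hsum : HasSum (fun m : ℕ+ => x * logDeriv (thetaFactor q m) x)
      ((∑' p : ℕ+ × ℕ+, x⁻¹ ^ (p.1 : ℕ) * q ^ ((p.1 : ℕ) * p.2))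
        - ∑' p : ℕ+ × ℕ+, x ^ (p.1 : ℕ) * q ^ ((p.1 : ℕ) * p.2)) := by
    simpa only [mul_logDeriv_thetaFactor hx] using
      (hasSum_mul_pow_div_one_sub_mul_pow hxq' hq).sub (hasSum_mul_pow_div_one_sub_mul_pow hxq hq)
  have hlog : logDeriv (thetaProd q) x = ∑' m : ℕ+, logDeriv (thetaFactor q m) x :=
    logDeriv_tprod_eq_tsum (qAnnulus.isOpen q) hx (thetaFactor_ne_zero hx)
      (differentiableOn_thetaFactor q)
      ((hsum.summable.mul_left x⁻¹).congr fun m => inv_mul_cancel_left₀ (qAnnulus.ne_zero hx) _)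
      (multipliableLocallyUniformlyOn_thetaFactor hq) (thetaProd_ne_zero hx)
  have hs := summable_pow_mul_pow_mul hxq hq
  have hs' := summable_pow_mul_pow_mul hxq' hq
  have hprod : ∑' (k : ℕ+) (r : ℕ+), (x ^ (k : ℕ) - x⁻¹ ^ (k : ℕ)) * q ^ ((k : ℕ) * r) =
      (∑' p : ℕ+ × ℕ+, x ^ (p.1 : ℕ) * q ^ ((p.1 : ℕ) * p.2))
        - ∑' p : ℕ+ × ℕ+, x⁻¹ ^ (p.1 : ℕ) * q ^ ((p.1 : ℕ) * p.2) := by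
    rw [← hs.tsum_sub hs', (hs.sub hs').tsum_prod]
    simp only [sub_mul]
  rw [hlog, ← tsum_mul_left, hsum.tsum_eq, hprod, neg_sub]

end thetaProd

theorem θ₁_eq_mul_thetaProd (w τ : ℂ) :
    θ₁ w τ = -I * cexp (2 * π * I * τ / 8) *
      (cexp (-(π * I * w)) * ((pp w - 1) * thetaProd (qq τ) (pp w))) := by
  have h : cexp (π * I * w) = cexp (-(π * I * w)) * pp w := by
    rw [pp, ← Complex.exp_add]
    ring_nf
  rw [θ₁, h]
  unfold thetaProd thetaFactor
  ring

theorem hasDerivAt_pp (z : ℂ) : HasDerivAt pp (2 * π * I * pp z) z :=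
  ((hasDerivAt_id z).const_mul (2 * π * I)).cexp.congr_deriv (by rw [pp, id]; ring)

theorem logDeriv_comp_pp {f : ℂ → ℂ} {z : ℂ} (hf : DifferentiableAt ℂ f (pp z)) :
    logDeriv (fun w => f (pp w)) z = 2 * π * I * (pp z * logDeriv f (pp z)) :=
  (logDeriv_comp hf (hasDerivAt_pp z).differentiableAt).trans
    (by rw [(hasDerivAt_pp z).deriv]; ring)

theorem logDeriv_cexp_neg_mul (c z : ℂ) : logDeriv (fun w => cexp (-(c * w))) z = -c := by
  have hd : HasDerivAt (fun w => cexp (-(c * w))) (cexp (-(c * z)) * -c) z :=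
    ((hasDerivAt_id z).const_mul c).fun_neg.cexp.congr_deriv (by simp)
  rw [logDeriv_apply, hd.deriv, mul_div_cancel_left₀ _ (Complex.exp_ne_zero _)]

theorem dz_div_eq_logDeriv (f : ℂ → ℂ) (z : ℂ) :
    dz f z / f z = (2 * π * I)⁻¹ * logDeriv f z := by
  rw [dz, logDeriv_apply, mul_div_assoc]

theorem Jdef_one (z τ : ℂ) :
    Jdef 1 z τ = pp z / (pp z - 1) - 1 / 2 -
      ∑' (k : ℕ+) (r : ℕ+), (pp z ^ (k : ℕ) - (pp z)⁻¹ ^ (k : ℕ)) * qq τ ^ ((k : ℕ) * r) := by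
  simp [Jdef, bernoulli_one, zpow_neg, inv_pow, ← sub_eq_add_neg]
  ring

theorem logDeriv_θ₁ {z τ : ℂ} (hx : pp z ∈ qAnnulus (qq τ)) (hp : pp z ≠ 1) :
    logDeriv (fun w => θ₁ w τ) z = -(π * I) +
      2 * π * I * (pp z / (pp z - 1) + pp z * logDeriv (thetaProd (qq τ)) (pp z)) := by
  have hp1 : pp z - 1 ≠ 0 := sub_ne_zero.mpr hp
  have hΘ : DifferentiableAt ℂ (thetaProd (qq τ)) (pp z) :=
    (differentiableOn_thetaProd (qAnnulus.norm_lt_one hx)).differentiableAt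
      ((qAnnulus.isOpen _).mem_nhds hx)
  set F : ℂ → ℂ := fun x => (x - 1) * thetaProd (qq τ) x
  have hF : DifferentiableAt ℂ F (pp z) := by fun_prop
  have hlogF : logDeriv F (pp z) = 1 / (pp z - 1) + logDeriv (thetaProd (qq τ)) (pp z) := by
    rw [logDeriv_mul (f := fun x => x - 1) _ hp1 (thetaProd_ne_zero hx) (by fun_prop) hΘ]
    simp [logDeriv_apply]
  have hθ : (fun w => θ₁ w τ) =
      fun w => -I * cexp (2 * π * I * τ / 8) * (cexp (-(π * I * w)) * F (pp w)) :=
    funext fun w => θ₁_eq_mul_thetaProd w τ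
  rw [hθ, logDeriv_const_mul _ _ (by simp [Complex.exp_ne_zero]),
    logDeriv_mul (f := fun w => cexp (-(π * I * w))) (g := fun w => F (pp w)) _
      (Complex.exp_ne_zero _) (mul_ne_zero hp1 (thetaProd_ne_zero hx))
      (by fun_prop) (hF.comp z (hasDerivAt_pp z).differentiableAt),
    logDeriv_cexp_neg_mul, logDeriv_comp_pp hF, hlogF, mul_add, mul_one_div]

theorem theta_log_deriv_eq_J_one_general (z τ : ℂ)
    (h1 : ‖qq τ‖ < ‖pp z‖)
    (h2 : ‖pp z‖ < (‖qq τ‖)⁻¹)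
    (hp : pp z ≠ 1) :
    dz (fun w => θ₁ w τ) z / θ₁ z τ = Jdef 1 z τ := by
  have hx : pp z ∈ qAnnulus (qq τ) := ⟨h1, h2⟩
  rw [dz_div_eq_logDeriv, logDeriv_θ₁ hx hp, mul_logDeriv_thetaProd hx, Jdef_one]
  field_simp
  ring

/-- the logarithmic `z`-derivative of `θ₁` equals `J_1`. -/
theorem theta_log_deriv_eq_J_one (z τ : ℂ) (hτ : 0 < τ.im)
    (h1 : ‖qq τ‖ < ‖pp z‖)
    (h2 : ‖pp z‖ < (‖qq τ‖)⁻¹)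
    (hp : pp z ≠ 1) :
    dz (fun w => θ₁ w τ) z / θ₁ z τ = Jdef 1 z τ :=
  theta_log_deriv_eq_J_one_general z τ h1 h2 hp
end
end

section
/- For all n ≥ 2 and all integers λ, μ, the completed function K_n(z,τ) = Σ_{k=0}^{n} (-1)^{n+k} C(n,k) J_k(z,τ) J_1(z,τ)^{n-k} is invariant under z ↦ z + λτ + μ, i.e. K_n(z + λτ + μ, τ) = K_n(z,τ). -/
open Complex

noncomputable section

/-- The completed deformed Eisenstein series `K_n`. -/
def Kdef (n : ℕ) (z τ : ℂ) : ℂ :=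
  ∑ k ∈ Finset.range (n + 1),
    (-1 : ℂ) ^ (n + k) * (n.choose k : ℂ) * Jdef k z τ * (Jdef 1 z τ) ^ (n - k)

/-!
Umbral calculus: let `L` be the linear functional on polynomials with `L (X ^ k) = J_k(z, τ)`.
Then `K_n = L ((X - J_1) ^ n)`, and the transformation law says that the shifted `J_k` equal
`L ((X - λ) ^ k)`; in particular the shifted `J_1` is `J_1 - λ`. Hence the shifted `K_n` is
`L (((X - λ) - (J_1 - λ)) ^ n) = L ((X - J_1) ^ n) = K_n`.
-/

open Polynomial Finset

theorem sub_pow_eq_sum {R : Type*} [CommRing R] (y x : R) (n : ℕ) :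
    (y - x) ^ n =
      ∑ k ∈ range (n + 1), (-1) ^ (n + k) * (n.choose k : R) * y ^ k * x ^ (n - k) := by
  rw [sub_eq_add_neg, add_pow]
  refine sum_congr rfl fun k hk => ?_
  have hsign : (-1 : R) ^ (n + k) = (-1) ^ (n - k) := by
    rw [show n + k = n - k + 2 * k by grind, pow_add, pow_mul]; simp
  rw [neg_pow, hsign]; ring

section UmbralEval

variable {R : Type*} [CommRing R]

def umbralEval (J : ℕ → R) : R[X] →ₗ[R] R := lsum fun k => LinearMap.mulRight R (J k)

theorem umbralEval_monomial (J : ℕ → R) (k : ℕ) (c : R) :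
    umbralEval J (monomial k c) = c * J k := by
  simp [umbralEval]

theorem umbralEval_comp (J : ℕ → R) (q p : R[X]) :
    umbralEval (fun k => umbralEval J (q ^ k)) p = umbralEval J (p.comp q) := by
  induction p using Polynomial.induction_on' with
  | add p p' hp hp' => rw [map_add, add_comp, map_add, hp, hp']
  | monomial k c =>
    rw [umbralEval_monomial, monomial_comp, C_mul', map_smul, smul_eq_mul]

theorem umbralEval_X_sub_C_pow (J : ℕ → R) (x : R) (n : ℕ) :
    umbralEval J ((X - C x) ^ n) =
      ∑ k ∈ range (n + 1), (-1) ^ (n + k) * (n.choose k : R) * J k * x ^ (n - k) := by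
  rw [sub_pow_eq_sum, map_sum]
  refine sum_congr rfl fun k _ => ?_
  have hmonomial : (-1) ^ (n + k) * (n.choose k : R[X]) * X ^ k * C x ^ (n - k)
      = monomial k ((-1) ^ (n + k) * n.choose k * x ^ (n - k)) := by
    rw [← C_mul_X_pow_eq_monomial]
    simp only [map_mul, map_pow, map_neg, map_one, map_natCast]
    ring
  rw [hmonomial, umbralEval_monomial]
  ring

theorem umbralEval_shift_X_sub_C_pow (J : ℕ → R) (a x : R) (n : ℕ) :
    umbralEval (fun k => umbralEval J ((X - C a) ^ k)) ((X - C (x - a)) ^ n) =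
      umbralEval J ((X - C x) ^ n) := by
  rw [umbralEval_comp, pow_comp, sub_comp, X_comp, C_comp, C_sub, sub_sub, add_sub_cancel]

end UmbralEval

theorem K_double_periodic_general (n : ℕ) (lam mu : ℤ) (z τ : ℂ)
    (hell : ∀ m : ℕ,
      Jdef m (z + lam * τ + mu) τ
        = ∑ k ∈ Finset.range (m + 1),
            (-1 : ℂ) ^ (m + k) * (m.choose k : ℂ) * (lam : ℂ) ^ (m - k) * Jdef k z τ) :
    Kdef n (z + lam * τ + mu) τ = Kdef n z τ := by
  set J : ℕ → ℂ := fun k => Jdef k z τ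
  have hshift : ∀ m, Jdef m (z + lam * τ + mu) τ = umbralEval J ((X - C (lam : ℂ)) ^ m) :=
    fun m => by
      rw [hell m, umbralEval_X_sub_C_pow]
      exact sum_congr rfl fun k _ => by ring
  have hJ0 : J 0 = 1 := by simp [J, Jdef]
  have hJ1 : Jdef 1 (z + lam * τ + mu) τ = J 1 - lam := by
    rw [hshift, umbralEval_X_sub_C_pow]
    simp [sum_range_succ, hJ0, sub_eq_neg_add]
  calc Kdef n (z + lam * τ + mu) τ
      = umbralEval (fun k => umbralEval J ((X - C (lam : ℂ)) ^ k))
          ((X - C (J 1 - lam)) ^ n) := by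
        rw [umbralEval_X_sub_C_pow, Kdef, hJ1]
        simp only [hshift]
    _ = umbralEval J ((X - C (J 1)) ^ n) := umbralEval_shift_X_sub_C_pow J _ _ n
    _ = Kdef n z τ := umbralEval_X_sub_C_pow J _ n

/-- assuming the elliptic transformation law for the `J_m`, the completion
`K_n` is invariant under `z ↦ z + λτ + μ`. -/
theorem K_double_periodic (n : ℕ) (hn : 2 ≤ n) (lam mu : ℤ) (z τ : ℂ) (hτ : 0 < τ.im)
    (hell : ∀ m : ℕ,
      Jdef m (z + lam * τ + mu) τ
        = ∑ k ∈ Finset.range (m + 1),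
            (-1 : ℂ) ^ (m + k) * (m.choose k : ℂ) * (lam : ℂ) ^ (m - k) * Jdef k z τ) :
    Kdef n (z + lam * τ + mu) τ = Kdef n z τ :=
  K_double_periodic_general n lam mu z τ hell

end
end
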